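/- Under the hypotheses of the exponential decay theorem for the exact hypergraph SIS process with concave infection function f, if β f(1) λ(W)/δ < 1 then the expected extinction time τ satisfies 𝔼[τ] ≤ (1 + log n) / (δ − β f(1) λ(W)). -/

import Mathlib

/-!
Writing `p_i(t) = 𝔼 X_i(t)` and `r = δ - β f(1) λ(W)`, concavity gives `f(k) ≤ k f(1)`, so the
infection rate is dominated by the linearised rate `β f(1) (W x)_i` and the means satisfy
`p' ≤ β f(1) W p - δ p`. As `p ≥ 0`, the Rayleigh bound `p ⬝ W p ≤ λ(W) ‖p‖²` turns this into
`(‖p‖²)' ≤ -2r ‖p‖²`; Grönwall and Cauchy–Schwarz then give `𝔼 ∑_i X_i(t) ≤ n e^{-rt}`.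
By Markov, `ℙ(τ > t) ≤ min(1, n e^{-rt})`, and integrating this tail, split at
`t₀ = log n / r`, gives `𝔼 τ ≤ t₀ + 1 / r`.
-/

open MeasureTheory ProbabilityTheory Filter Finset

/-- The hypergraph SIS infection rate `λ_i(x) = β ∑_h I_{ih} f(∑_j I_{jh} x_j)`. -/
noncomputable def infRate (n m : ℕ) (Inc : Fin n → Fin m → ℕ) (β : ℝ) (f : ℕ → ℝ)
    (x : Fin n → ℕ) (i : Fin n) : ℝ :=
  β * ∑ h : Fin m, (Inc i h : ℝ) * f (∑ j, Inc j h * x j)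

open Matrix Real Set

lemma apply_le_mul_apply_one_of_concave {f : ℕ → ℝ}
    (hconc : ∀ k : ℕ, 1 ≤ k → f (k + 1) - f k ≤ f k - f (k - 1)) (hf0 : f 0 = 0) (k : ℕ) :
    f k ≤ k * f 1 := by
  have hinc : ∀ k, f (k + 1) - f k ≤ f 1 := by
    intro k
    induction k with
    | zero => simp [hf0]
    | succ k ih =>
      have h := hconc (k + 1) (by omega)
      rw [Nat.add_sub_cancel] at h
      linarith
  induction k with
  | zero => simp [hf0]
  | succ k ih => push_cast; linarith [hinc k]

open scoped MatrixOrder in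
lemma Matrix.IsHermitian.dotProduct_mulVec_le {ι : Type*} [Fintype ι] [DecidableEq ι]
    {W : Matrix ι ι ℝ} (hW : W.IsHermitian) {r : ℝ} (hr : ∀ i, hW.eigenvalues i ≤ r)
    (x : ι → ℝ) : x ⬝ᵥ W *ᵥ x ≤ r * (x ⬝ᵥ x) := by
  have hle : W ≤ algebraMap ℝ _ r := le_algebraMap_of_spectrum_le <| by
    rw [hW.spectrum_real_eq_range_eigenvalues]
    rintro _ ⟨i, rfl⟩
    exact hr i
  simpa [sub_mulVec, dotProduct_sub, Algebra.algebraMap_eq_smul_one, smul_mulVec,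
    dotProduct_smul] using (Matrix.le_iff.mp hle).dotProduct_mulVec_nonneg x

lemma le_mul_exp_of_hasDerivAt_le_mul {g g' : ℝ → ℝ} {c : ℝ}
    (hg : ∀ t, 0 ≤ t → HasDerivAt g (g' t) t) (hle : ∀ t, 0 ≤ t → g' t ≤ c * g t)
    {t : ℝ} (ht : 0 ≤ t) : g t ≤ g 0 * exp (c * t) := by
  simpa [gronwallBound_ε0] using le_gronwallBound_of_liminf_deriv_right_le (ε := 0) (b := t)
    (fun s hs => (hg s hs.1).continuousAt.continuousWithinAt)
    (fun s hs _ hr => (hg s hs.1).hasDerivWithinAt.liminf_right_slope_le hr) le_rfl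
    (fun s hs => by simpa using hle s hs.1) t ⟨ht, le_rfl⟩

section MeanField

variable {ι : Type*} [Fintype ι]

lemma hasDerivAt_dotProduct_self {p q : ℝ → ι → ℝ} {t : ℝ}
    (hp : ∀ i, HasDerivAt (fun s => p s i) (q t i) t) :
    HasDerivAt (fun s => p s ⬝ᵥ p s) (2 * (p t ⬝ᵥ q t)) t := by
  refine (HasDerivAt.fun_sum (u := univ) fun i _ => (hp i).fun_mul (hp i)).congr_deriv ?_
  simp only [dotProduct, mul_sum]
  exact sum_congr rfl fun i _ => by ring

variable [DecidableEq ι] {W : Matrix ι ι ℝ} {a δ r : ℝ}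

lemma dotProduct_le_mul_dotProduct_self (hW : W.IsHermitian) (hr : ∀ i, hW.eigenvalues i ≤ r)
    (ha : 0 ≤ a) {x y : ι → ℝ} (hx : 0 ≤ x) (hy : y ≤ a • W *ᵥ x - δ • x) :
    x ⬝ᵥ y ≤ (a * r - δ) * (x ⬝ᵥ x) :=
  calc x ⬝ᵥ y ≤ x ⬝ᵥ (a • W *ᵥ x - δ • x) := dotProduct_le_dotProduct_of_nonneg_left hy hx
    _ = a * (x ⬝ᵥ W *ᵥ x) - δ * (x ⬝ᵥ x) := by
      rw [dotProduct_sub, dotProduct_smul, dotProduct_smul, smul_eq_mul, smul_eq_mul]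
    _ ≤ a * (r * (x ⬝ᵥ x)) - δ * (x ⬝ᵥ x) := by gcongr; exact hW.dotProduct_mulVec_le hr x
    _ = (a * r - δ) * (x ⬝ᵥ x) := by ring

lemma dotProduct_self_le_mul_exp (hW : W.IsHermitian) (hr : ∀ i, hW.eigenvalues i ≤ r)
    (ha : 0 ≤ a) {p q : ℝ → ι → ℝ} (hp : ∀ t, 0 ≤ t → 0 ≤ p t)
    (hderiv : ∀ i t, 0 ≤ t → HasDerivAt (fun s => p s i) (q t i) t)
    (hq : ∀ t, 0 ≤ t → q t ≤ a • W *ᵥ p t - δ • p t) {t : ℝ} (ht : 0 ≤ t) :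
    p t ⬝ᵥ p t ≤ (p 0 ⬝ᵥ p 0) * exp (2 * (a * r - δ) * t) :=
  le_mul_exp_of_hasDerivAt_le_mul (fun s hs => hasDerivAt_dotProduct_self (hderiv · s hs))
    (fun s hs => by
      linarith [dotProduct_le_mul_dotProduct_self hW hr ha (hp s hs) (hq s hs)]) ht

lemma sum_le_card_mul_exp (hW : W.IsHermitian) (hr : ∀ i, hW.eigenvalues i ≤ r)
    (ha : 0 ≤ a) {p q : ℝ → ι → ℝ} (hp : ∀ t, 0 ≤ t → 0 ≤ p t) (hp₀ : p 0 ≤ 1)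
    (hderiv : ∀ i t, 0 ≤ t → HasDerivAt (fun s => p s i) (q t i) t)
    (hq : ∀ t, 0 ≤ t → q t ≤ a • W *ᵥ p t - δ • p t) {t : ℝ} (ht : 0 ≤ t) :
    ∑ i, p t i ≤ Fintype.card ι * exp ((a * r - δ) * t) := by
  have hinit : p 0 ⬝ᵥ p 0 ≤ Fintype.card ι := by
    calc p 0 ⬝ᵥ p 0 ≤ ∑ _i : ι, (1 : ℝ) :=
          sum_le_sum fun i _ => mul_le_one₀ (hp₀ i) (hp 0 le_rfl i) (hp₀ i)
      _ = Fintype.card ι := by simp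
  have hsq : (∑ i, p t i) ^ 2 ≤ (Fintype.card ι * exp ((a * r - δ) * t)) ^ 2 :=
    calc (∑ i, p t i) ^ 2 ≤ Fintype.card ι * (p t ⬝ᵥ p t) := by
          simpa [dotProduct, sq] using sq_sum_le_card_mul_sum_sq (s := univ) (f := p t)
      _ ≤ Fintype.card ι * (Fintype.card ι * exp (2 * (a * r - δ) * t)) := by
          gcongr
          exact (dotProduct_self_le_mul_exp hW hr ha hp hderiv hq ht).trans
            (by gcongr)
      _ = (Fintype.card ι * exp ((a * r - δ) * t)) ^ 2 := by
          rw [mul_pow, sq (exp _), ← exp_add]; ring_nf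
  exact (pow_le_pow_iff_left₀ (sum_nonneg fun i _ => hp t ht i) (by positivity)
    two_ne_zero).mp hsq

end MeanField

lemma integrableOn_min_one_mul_exp {N a : ℝ} (hN : 0 ≤ N) (ha : a < 0) :
    IntegrableOn (fun t => min 1 (N * exp (a * t))) (Ioi 0) := by
  refine ((integrableOn_exp_mul_Ioi ha 0).const_mul N).mono' (by fun_prop) (ae_of_all _ fun t => ?_)
  rw [Real.norm_of_nonneg (le_min zero_le_one (by positivity))]
  exact min_le_right _ _

lemma setIntegral_Ioi_min_one_mul_exp_le {N a : ℝ} (hN : 1 ≤ N) (ha : a < 0) :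
    ∫ t in Ioi 0, min 1 (N * exp (a * t)) ≤ (1 + log N) / -a := by
  set t₀ := log N / -a
  have ht₀ : 0 ≤ t₀ := div_nonneg (log_nonneg hN) (neg_nonneg.mpr ha.le)
  have hint := integrableOn_min_one_mul_exp (zero_le_one.trans hN) ha
  have hhead : ∫ t in Ioc 0 t₀, min 1 (N * exp (a * t)) ≤ t₀ :=
    calc _ ≤ ∫ t in Ioc 0 t₀, (1 : ℝ) :=
          setIntegral_mono_on (hint.mono_set Ioc_subset_Ioi_self)
            (integrableOn_const measure_Ioc_lt_top.ne) measurableSet_Ioc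
            fun t _ => min_le_left _ _
      _ = t₀ := by simp [ht₀]
  have htail : ∫ t in Ioi t₀, min 1 (N * exp (a * t)) ≤ 1 / -a :=
    calc _ ≤ ∫ t in Ioi t₀, N * exp (a * t) :=
          setIntegral_mono_on (hint.mono_set (Ioi_subset_Ioi ht₀))
            ((integrableOn_exp_mul_Ioi ha t₀).const_mul N) measurableSet_Ioi
            fun t _ => min_le_right _ _
      _ = 1 / -a := by
          have : a * t₀ = -log N := by simp only [t₀]; field_simp [ha.ne]
          rw [integral_const_mul, integral_exp_mul_Ioi ha, this, Real.exp_neg,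
            exp_log (by linarith)]
          field_simp
  rw [← Ioc_union_Ioi_eq_Ioi ht₀, setIntegral_union (Ioc_disjoint_Ioi le_rfl) measurableSet_Ioi
    (hint.mono_set Ioc_subset_Ioi_self) (hint.mono_set (Ioi_subset_Ioi ht₀))]
  calc _ ≤ t₀ + 1 / -a := add_le_add hhead htail
    _ = (1 + log N) / -a := by ring

lemma integral_le_setIntegral_of_measureReal_lt_le {Ω : Type*} [MeasurableSpace Ω]
    {μ : Measure Ω} {Z : Ω → ℝ} (hZ : ∀ ω, 0 ≤ Z ω) {φ : ℝ → ℝ} (hφ : IntegrableOn φ (Ioi 0))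
    (htail : ∀ t, 0 < t → μ.real {ω | t < Z ω} ≤ φ t) :
    ∫ ω, Z ω ∂μ ≤ ∫ t in Ioi 0, φ t := by
  by_cases hZi : Integrable Z μ
  · rw [hZi.integral_eq_integral_meas_lt (ae_of_all μ hZ)]
    exact integral_mono_of_nonneg (ae_of_all _ fun t => measureReal_nonneg) hφ
      ((ae_restrict_iff' measurableSet_Ioi).mpr (ae_of_all _ htail))
  · rw [integral_undef hZi]
    exact setIntegral_nonneg measurableSet_Ioi fun t ht => measureReal_nonneg.trans (htail t ht)

section Probability

variable {Ω : Type*} [MeasurableSpace Ω] {μ : Measure Ω}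

lemma integrable_comp_of_forall_mem_finite {α : Type*} [MeasurableSpace α] [Countable α]
    [MeasurableSingletonClass α] [IsFiniteMeasure μ] {Y : Ω → α} (hY : Measurable Y)
    {s : Set α} (hs : s.Finite) (hYs : ∀ ω, Y ω ∈ s) (G : α → ℝ) :
    Integrable (fun ω => G (Y ω)) μ := by
  obtain ⟨C, hC⟩ := (hs.image fun x => ‖G x‖).bddAbove
  exact .of_bound ((measurable_of_countable G).comp hY).aestronglyMeasurable C
    (ae_of_all _ fun ω => hC ⟨_, hYs ω, rfl⟩)

lemma measureReal_lt_sInf_le_sum_integral [IsFiniteMeasure μ] {ι : Type*} [Fintype ι]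
    {S : ℝ → Ω → ι → ℕ} {τ : Ω → ℝ} (hτ : ∀ ω, τ ω = sInf {t : ℝ | 0 ≤ t ∧ ∑ i, S t ω i = 0})
    {t : ℝ} (ht : 0 ≤ t) (hS : ∀ i, Integrable (fun ω => (S t ω i : ℝ)) μ) :
    μ.real {ω | t < τ ω} ≤ ∑ i, ∫ ω, (S t ω i : ℝ) ∂μ := by
  have hsub : {ω | t < τ ω} ⊆ {ω | 1 ≤ ∑ i, (S t ω i : ℝ)} := by
    intro ω hω
    show 1 ≤ ∑ i, (S t ω i : ℝ)
    rw [← Nat.cast_sum, Nat.one_le_cast, Nat.one_le_iff_ne_zero]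
    intro hS0
    have : τ ω ≤ t := by
      rw [hτ ω]
      exact csInf_le ⟨0, fun _ hs => hs.1⟩ ⟨ht, hS0⟩
    exact this.not_gt hω
  rw [← integral_finsetSum _ fun i _ => hS i]
  exact (measureReal_mono hsub).trans <| by
    simpa using mul_meas_ge_le_integral_of_nonneg
      (ae_of_all _ fun ω => sum_nonneg fun i _ => Nat.cast_nonneg _)
      (integrable_finsetSum _ fun i _ => hS i) 1

end Probability

section SIS

variable {n m : ℕ} {Inc : Fin n → Fin m → ℕ} {β δ : ℝ} {f : ℕ → ℝ}
  {W : Matrix (Fin n) (Fin n) ℝ}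

lemma infRate_nonneg (hβ : 0 ≤ β) (hf : ∀ k, 0 ≤ f k) (x : Fin n → ℕ) (i : Fin n) :
    0 ≤ infRate n m Inc β f x i :=
  mul_nonneg hβ (sum_nonneg fun _ _ => mul_nonneg (Nat.cast_nonneg _) (hf _))

lemma infRate_le_mulVec (hβ : 0 ≤ β) (hf : ∀ k, f k ≤ k * f 1)
    (hW : ∀ i j, W i j = ((∑ h, Inc i h * Inc j h : ℕ) : ℝ)) (x : Fin n → ℕ) (i : Fin n) :
    infRate n m Inc β f x i ≤ β * f 1 * (W *ᵥ fun j => (x j : ℝ)) i :=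
  calc infRate n m Inc β f x i
      ≤ β * ∑ h, (Inc i h : ℝ) * ((∑ j, Inc j h * x j : ℕ) * f 1) := by
        unfold infRate
        gcongr
        exact hf _
    _ = β * f 1 * (W *ᵥ fun j => (x j : ℝ)) i := by
        simp only [mulVec, dotProduct, hW]
        push_cast
        simp only [mul_sum, sum_mul]
        rw [sum_comm]
        exact sum_congr rfl fun _ _ => sum_congr rfl fun _ _ => by ring

lemma one_sub_mul_infRate_le (hβ : 0 ≤ β) (hf : ∀ k, 0 ≤ f k) (hflin : ∀ k, f k ≤ k * f 1)
    (hW : ∀ i j, W i j = ((∑ h, Inc i h * Inc j h : ℕ) : ℝ)) (x : Fin n → ℕ) (i : Fin n) :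
    (1 - (x i : ℝ)) * infRate n m Inc β f x i ≤ β * f 1 * (W *ᵥ fun j => (x j : ℝ)) i := by
  have := mul_nonneg (Nat.cast_nonneg (α := ℝ) (x i)) (infRate_nonneg (Inc := Inc) hβ hf x i)
  linarith [infRate_le_mulVec hβ hflin hW x i]

lemma integral_drift_le {Ω : Type*} [MeasurableSpace Ω] {μ : Measure Ω} [IsFiniteMeasure μ]
    (hβ : 0 ≤ β) (hf : ∀ k, 0 ≤ f k) (hflin : ∀ k, f k ≤ k * f 1)
    (hW : ∀ i j, W i j = ((∑ h, Inc i h * Inc j h : ℕ) : ℝ))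
    {Y : Ω → Fin n → ℕ} (hY : Measurable Y) (hY1 : ∀ ω, Y ω ≤ 1) (i : Fin n) :
    ∫ ω, ((1 - (Y ω i : ℝ)) * infRate n m Inc β f (Y ω) i - δ * (Y ω i : ℝ)) ∂μ
      ≤ β * f 1 * (W *ᵥ fun j => ∫ ω, (Y ω j : ℝ) ∂μ) i - δ * ∫ ω, (Y ω i : ℝ) ∂μ := by
  have hint (G : (Fin n → ℕ) → ℝ) : Integrable (fun ω => G (Y ω)) μ :=
    integrable_comp_of_forall_mem_finite hY (finite_Iic 1) hY1 G
  have hcoord (j : Fin n) : Integrable (fun ω => (Y ω j : ℝ)) μ := hint fun x => x j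
  have hdrift : Integrable (fun ω =>
      (1 - (Y ω i : ℝ)) * infRate n m Inc β f (Y ω) i - δ * (Y ω i : ℝ)) μ :=
    hint fun x => (1 - (x i : ℝ)) * infRate n m Inc β f x i - δ * x i
  have hlin : Integrable (fun ω => β * f 1 * (W *ᵥ fun j => (Y ω j : ℝ)) i) μ :=
    hint fun x => β * f 1 * (W *ᵥ fun j => (x j : ℝ)) i
  calc _ ≤ ∫ ω, (β * f 1 * (W *ᵥ fun j => (Y ω j : ℝ)) i - δ * (Y ω i : ℝ)) ∂μ :=
        integral_mono hdrift (hlin.sub ((hcoord i).const_mul δ))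
          fun ω => sub_le_sub_right (one_sub_mul_infRate_le hβ hf hflin hW (Y ω) i) _
    _ = _ := by
        rw [integral_sub hlin ((hcoord i).const_mul δ), integral_const_mul, integral_const_mul]
        simp only [mulVec, dotProduct]
        rw [integral_finsetSum _ fun j _ => (hcoord j).const_mul (W i j)]
        simp only [integral_const_mul]

end SIS

/-- Expected extinction time bound for the exact stochastic hypergraph SIS process with
concave infection function: if `β f(1) λ(W)/δ < 1` then
`𝔼[τ] ≤ (1 + log n)/(δ − β f(1) λ(W))`, where `τ` is the extinction time. -/
theorem exact_process_extinction_time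
    (n m : ℕ) (hn : 0 < n) (Inc : Fin n → Fin m → ℕ)
    (β δ : ℝ) (hβ : 0 < β) (hδ : 0 < δ)
    (f : ℕ → ℝ)
    (hconc : ∀ k : ℕ, 1 ≤ k → f (k + 1) - f k ≤ f k - f (k - 1))
    (hf0 : f 0 = 0) (hnonneg : ∀ k, 0 ≤ f k)
    (W : Matrix (Fin n) (Fin n) ℝ)
    (hWdef : ∀ i j, W i j = ((∑ h, Inc i h * Inc j h : ℕ) : ℝ))
    (hW : W.IsHermitian)
    (lamW : ℝ)
    (hlam : lamW = Finset.univ.sup'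
      (by simpa using Finset.univ_nonempty_iff.mpr (Fin.pos_iff_nonempty.mp hn))
      hW.eigenvalues)
    (hspec : β * f 1 * lamW / δ < 1)
    (Ω : Type*) [MeasurableSpace Ω] (μ : Measure Ω) [IsProbabilityMeasure μ]
    (X : ℝ → Ω → Fin n → ℕ)
    (hmeas : ∀ t, Measurable (X t))
    (hval : ∀ t ω i, X t ω i = 0 ∨ X t ω i = 1)
    (hdyn : ∀ i : Fin n, ∀ t : ℝ, 0 ≤ t →
      HasDerivAt (fun s => ∫ ω, ((X s ω i : ℝ)) ∂μ)
        (∫ ω, ((1 - (X t ω i : ℝ)) * infRate n m Inc β f (X t ω) i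
            - δ * (X t ω i : ℝ)) ∂μ) t)
    (τ : Ω → ℝ)
    (hτ : ∀ ω, τ ω = sInf {t : ℝ | 0 ≤ t ∧ ∑ i, X t ω i = 0}) :
    ∫ ω, τ ω ∂μ ≤ (1 + Real.log n) / (δ - β * f 1 * lamW) := by
  have hrate : β * f 1 * lamW - δ < 0 := by linarith [(div_lt_one hδ).mp hspec]
  have hX1 (t : ℝ) (ω : Ω) : X t ω ≤ 1 := fun i => (hval t ω i).elim (· ▸ zero_le_one) (·.le)
  have hint (t : ℝ) (i : Fin n) : Integrable (fun ω => (X t ω i : ℝ)) μ :=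
    integrable_comp_of_forall_mem_finite (hmeas t) (finite_Iic 1) (hX1 t) fun x => (x i : ℝ)
  set p : ℝ → Fin n → ℝ := fun t i => ∫ ω, (X t ω i : ℝ) ∂μ
  have hp₀ : p 0 ≤ 1 := fun i =>
    (integral_mono (hint 0 i) (integrable_const 1)
      fun ω => Nat.cast_le_one.mpr (hX1 0 ω i)).trans (by simp)
  have hmean (t : ℝ) (ht : 0 ≤ t) : ∑ i, p t i ≤ n * exp ((β * f 1 * lamW - δ) * t) := by
    simpa using sum_le_card_mul_exp hW (fun i => hlam ▸ le_sup' _ (mem_univ i))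
      (mul_nonneg hβ.le (hnonneg 1)) (fun t _ i => integral_nonneg fun ω => Nat.cast_nonneg _)
      hp₀ hdyn (fun t _ i => by
        simpa using integral_drift_le hβ.le hnonneg (apply_le_mul_apply_one_of_concave hconc hf0)
          hWdef (hmeas t) (hX1 t) i) ht
  have htail (t : ℝ) (ht : 0 < t) :
      μ.real {ω | t < τ ω} ≤ min 1 (n * exp ((β * f 1 * lamW - δ) * t)) :=
    le_min measureReal_le_one
      ((measureReal_lt_sInf_le_sum_integral hτ ht.le (hint t)).trans (hmean t ht.le))
  calc ∫ ω, τ ω ∂μ ≤ ∫ t in Ioi 0, min 1 (n * exp ((β * f 1 * lamW - δ) * t)) :=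
        integral_le_setIntegral_of_measureReal_lt_le
          (fun ω => hτ ω ▸ Real.sInf_nonneg fun _ h => h.1)
          (integrableOn_min_one_mul_exp (Nat.cast_nonneg n) hrate) htail
    _ ≤ (1 + log n) / -(β * f 1 * lamW - δ) :=
        setIntegral_Ioi_min_one_mul_exp_le (Nat.one_le_cast.mpr hn) hrate
    _ = (1 + log n) / (δ - β * f 1 * lamW) := by rw [neg_sub]
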